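/- arXiv:1104.2964 — 2 statements merged into one kernel-verified Lean document; each statement's English description precedes it below -/
import Mathlib

section
/- Let n ≥ 1 and let t : {1,...,n} → [0,1] be a function such that for every j with 1 ≤ j ≤ n, the number of indices a with t(a) < j/n is at most j−1. Then ∑_{a=1}^n t(a) ≥ (n+1)/2. -/
lemma gauss_icc (n : ℕ) : ∑ j ∈ Finset.Icc 1 n, (j : ℝ) = n * (n + 1) / 2 := by
  induction n with
  | zero => simp
  | succ m ih =>
    rw [Finset.sum_Icc_succ_top (by omega)]
    push_cast
    rw [ih]
    ring

/-- If t : {1,...,n} → [0,1] is such that for every 1 ≤ j ≤ n the number of indices a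
with t(a) < j/n is at most j − 1, then ∑_a t(a) ≥ (n+1)/2. -/
theorem stmt4 (n : ℕ) (hn : 1 ≤ n) (t : ℕ → ℝ)
    (h01 : ∀ a ∈ Finset.Icc 1 n, 0 ≤ t a ∧ t a ≤ 1)
    (hcnt : ∀ j ∈ Finset.Icc 1 n,
      ((Finset.Icc 1 n).filter (fun a => t a < (j : ℝ) / (n : ℝ))).card ≤ j - 1) :
    ∑ a ∈ Finset.Icc 1 n, t a ≥ ((n : ℝ) + 1) / 2 := by
  have hn0 : (0:ℝ) < n := by exact_mod_cast hn
  set I := Finset.Icc 1 n with hI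
  -- Step A: for each a, card {j ∈ I : j/n ≤ t a} ≤ n * t a
  have hA : ∀ a ∈ I, ((I.filter (fun j : ℕ => (j:ℝ)/n ≤ t a)).card : ℝ) ≤ n * t a := by
    intro a ha
    have ht0 : 0 ≤ t a := (h01 a ha).1
    have hsub : I.filter (fun j : ℕ => (j:ℝ)/n ≤ t a) ⊆
        Finset.Icc 1 (Nat.floor ((n:ℝ) * t a)) := by
      intro j hj
      simp only [hI, Finset.mem_filter, Finset.mem_Icc] at hj ⊢
      refine ⟨hj.1.1, ?_⟩
      have hjle : (j:ℝ) ≤ n * t a := by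
        have h2 := hj.2
        rw [div_le_iff₀ hn0] at h2
        linarith
      exact Nat.le_floor hjle
    have h1 : (I.filter (fun j : ℕ => (j:ℝ)/n ≤ t a)).card ≤ Nat.floor ((n:ℝ) * t a) := by
      have := Finset.card_le_card hsub
      simpa [Nat.card_Icc] using this
    calc ((I.filter (fun j : ℕ => (j:ℝ)/n ≤ t a)).card : ℝ)
        ≤ (Nat.floor ((n:ℝ) * t a) : ℝ) := by exact_mod_cast h1
      _ ≤ n * t a := Nat.floor_le (by positivity)
  -- Step B: swap sums
  have hB : ∑ a ∈ I, (I.filter (fun j : ℕ => (j:ℝ)/n ≤ t a)).card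
          = ∑ j ∈ I, (I.filter (fun a => (j:ℝ)/n ≤ t a)).card := by
    simp only [Finset.card_filter]
    exact Finset.sum_comm
  -- Step C: lower bound on each column count
  have hC : ∀ j ∈ I, n + 1 - j ≤ (I.filter (fun a => (j:ℝ)/n ≤ t a)).card := by
    intro j hj
    have hle := hcnt j hj
    have hsplit := Finset.card_filter_add_card_filter_not
      (s := I) (p := fun a => t a < (j:ℝ)/n)
    have heq : I.filter (fun a => ¬ t a < (j:ℝ)/n)
        = I.filter (fun a => (j:ℝ)/n ≤ t a) := by
      apply Finset.filter_congr
      intro a _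
      simp [not_lt]
    have hcard : I.card = n := by simp [hI]
    have hj1 : 1 ≤ j := (Finset.mem_Icc.mp hj).1
    rw [heq, hcard] at hsplit
    omega
  -- Combine
  have hsum1 : (∑ j ∈ I, ((n + 1 - j : ℕ) : ℝ))
      ≤ ∑ a ∈ I, ((I.filter (fun j : ℕ => (j:ℝ)/n ≤ t a)).card : ℝ) := by
    rw [← Nat.cast_sum, ← Nat.cast_sum, hB]
    exact_mod_cast Finset.sum_le_sum hC
  have hsum2 : ∑ j ∈ I, ((n + 1 - j : ℕ) : ℝ) = n * (n + 1) / 2 := by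
    have hcongr : ∑ j ∈ I, ((n + 1 - j : ℕ) : ℝ) = ∑ j ∈ I, ((n:ℝ) + 1 - j) := by
      apply Finset.sum_congr rfl
      intro j hj
      have hj1 := (Finset.mem_Icc.mp hj)
      have : j ≤ n + 1 := by omega
      push_cast [Nat.cast_sub this]
      ring
    rw [hcongr, Finset.sum_sub_distrib, Finset.sum_const, gauss_icc]
    have hcard : I.card = n := by simp [hI]
    rw [hcard]
    ring
  have hsum3 : ∑ a ∈ I, ((I.filter (fun j : ℕ => (j:ℝ)/n ≤ t a)).card : ℝ)
      ≤ ∑ a ∈ I, n * t a := Finset.sum_le_sum hA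
  have hfinal : n * ((n + 1) / 2) ≤ n * ∑ a ∈ I, t a := by
    rw [Finset.mul_sum]
    calc n * ((n + 1) / 2 : ℝ) = n * (n+1) / 2 := by ring
      _ ≤ ∑ a ∈ I, n * t a := by
          rw [← hsum2]
          exact le_trans hsum1 hsum3
  exact le_of_mul_le_mul_left hfinal hn0
end

section
/- Let n ≥ 1 and let x_1, ..., x_n be reals with 0 ≤ x_i ≤ i/n for each i. Then ∑_{i=1}^n (1/2 + x_i²/2) ≥ 0.66 · ∑_{i=1}^n ((n−i)/n + x_i). -/
private lemma sumIocId (m : ℕ) :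
    ∑ i ∈ Finset.Ioc 0 m, (i : ℝ) = m * (m + 1) / 2 := by
  induction m with
  | zero => simp
  | succ p ih =>
      rw [Finset.sum_Ioc_succ_top (Nat.zero_le _), ih]
      push_cast; ring

private lemma sumIocSq (m : ℕ) :
    ∑ i ∈ Finset.Ioc 0 m, (i : ℝ) ^ 2 = m * (m + 1) * (2 * m + 1) / 6 := by
  induction m with
  | zero => simp
  | succ p ih =>
      rw [Finset.sum_Ioc_succ_top (Nat.zero_le _), ih]
      push_cast; ring

private lemma pt1 (N t y : ℝ) (hN : 0 < N) (hxt : y ≤ t / N) (ht : 50 * t ≤ 33 * N) :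
    t ^ 2 / (2 * N ^ 2) - 16 / 100 ≤ 1 / 2 + y ^ 2 / 2 - 66 / 100 * ((N - t) / N + y) := by
  have hNne : N ≠ 0 := ne_of_gt hN
  have h1 : t / N ≤ 66 / 100 := by
    rw [div_le_iff₀ hN]; linarith
  have e : (1 / 2 + y ^ 2 / 2 - 66 / 100 * ((N - t) / N + y))
      - (t ^ 2 / (2 * N ^ 2) - 16 / 100)
      = ((66 / 100 - y) ^ 2 - (66 / 100 - t / N) ^ 2) / 2 := by
    field_simp; ring
  have h2 : (0:ℝ) ≤ 66 / 100 - t / N := by linarith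
  have h3 : 66 / 100 - t / N ≤ 66 / 100 - y := by linarith
  nlinarith [pow_le_pow_left₀ h2 h3 2]

private lemma pt2 (N t y : ℝ) (hN : 0 < N) :
    66 / 100 * (t / N) - 3778 / 10000 ≤ 1 / 2 + y ^ 2 / 2 - 66 / 100 * ((N - t) / N + y) := by
  have hNne : N ≠ 0 := ne_of_gt hN
  have e : (1 / 2 + y ^ 2 / 2 - 66 / 100 * ((N - t) / N + y))
      - (66 / 100 * (t / N) - 3778 / 10000) = (y - 66 / 100) ^ 2 / 2 := by
    field_simp; ring
  nlinarith [sq_nonneg (y - 66 / 100)]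

/-- The inequality underlying the 0.66 linear welfare factor of PS on general
instances: if 0 ≤ x_i ≤ i/n for each 1 ≤ i ≤ n, then
∑ (1/2 + x_i²/2) ≥ 0.66 · ∑ ((n−i)/n + x_i). -/
theorem stmt14 (n : ℕ) (hn : 1 ≤ n) (x : ℕ → ℝ)
    (hx : ∀ i ∈ Finset.Icc 1 n, 0 ≤ x i ∧ x i ≤ (i : ℝ) / (n : ℝ)) :
    ∑ i ∈ Finset.Icc 1 n, (1 / 2 + (x i) ^ 2 / 2)
      ≥ 0.66 * ∑ i ∈ Finset.Icc 1 n, (((n : ℝ) - (i : ℝ)) / (n : ℝ) + x i) := by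
  have hN : (0:ℝ) < (n:ℝ) := by exact_mod_cast Nat.lt_of_lt_of_le Nat.zero_lt_one hn
  have hN1 : (1:ℝ) ≤ (n:ℝ) := by exact_mod_cast hn
  set k := 33 * n / 50 with hkdef
  have hmod := Nat.div_add_mod (33 * n) 50
  have hmlt : 33 * n % 50 < 50 := Nat.mod_lt _ (by norm_num)
  have hk1 : 50 * k ≤ 33 * n := by omega
  have hk2 : 33 * n ≤ 50 * k + 49 := by omega
  have hkn : k ≤ n := by omega
  have hK1 : (50:ℝ) * k ≤ 33 * n := by exact_mod_cast hk1
  have hK2 : (33:ℝ) * n ≤ 50 * k + 49 := by exact_mod_cast hk2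
  have hK0 : (0:ℝ) ≤ (k:ℝ) := Nat.cast_nonneg k
  -- The piecewise lower bound
  set B : ℕ → ℝ := fun i =>
    if 50 * i ≤ 33 * n then (i:ℝ) ^ 2 / (2 * (n:ℝ) ^ 2) - 16 / 100
    else 66 / 100 * ((i:ℝ) / (n:ℝ)) - 3778 / 10000 with hBdef
  have h066 : (0.66 : ℝ) = 66 / 100 := by norm_num
  rw [ge_iff_le, Finset.mul_sum, ← sub_nonneg, ← Finset.sum_sub_distrib]
  have hbound : ∀ i ∈ Finset.Icc 1 n,
      B i ≤ 1 / 2 + (x i) ^ 2 / 2 - 0.66 * (((n:ℝ) - (i:ℝ)) / (n:ℝ) + x i) := by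
    intro i hi
    obtain ⟨hx0, hxt⟩ := hx i hi
    rw [h066, hBdef]
    by_cases hc : 50 * i ≤ 33 * n
    · simp only [if_pos hc]
      exact pt1 (n:ℝ) (i:ℝ) (x i) hN hxt (by exact_mod_cast hc)
    · simp only [if_neg hc]
      exact pt2 (n:ℝ) (i:ℝ) (x i) hN
  have hsplit : ∑ i ∈ Finset.Icc 1 n, B i
      = ∑ i ∈ Finset.Ioc 0 k, B i + ∑ i ∈ Finset.Ioc k n, B i := by
    rw [show Finset.Icc 1 n = Finset.Ioc 0 n from Finset.Icc_add_one_left_eq_Ioc 0 n]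
    exact (Finset.sum_Ioc_consecutive B (Nat.zero_le k) hkn).symm
  have hsum1 : ∑ i ∈ Finset.Ioc 0 k, B i
      = ((k:ℝ) * (k + 1) * (2 * k + 1) / 6) / (2 * (n:ℝ) ^ 2) - 16 / 100 * k := by
    have : ∀ i ∈ Finset.Ioc 0 k, B i = (i:ℝ) ^ 2 / (2 * (n:ℝ) ^ 2) - 16 / 100 := by
      intro i hi
      have hik := (Finset.mem_Ioc.mp hi).2
      have : 50 * i ≤ 33 * n := by omega
      simp only [hBdef, if_pos this]
    rw [Finset.sum_congr rfl this, Finset.sum_sub_distrib, Finset.sum_const,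
      Nat.card_Ioc, ← Finset.sum_div, sumIocSq]
    simp [mul_comm]
  have hsum2 : ∑ i ∈ Finset.Ioc k n, B i
      = 66 / 100 * (((n:ℝ) * (n + 1) / 2 - (k:ℝ) * (k + 1) / 2) / (n:ℝ))
        - 3778 / 10000 * ((n:ℝ) - (k:ℝ)) := by
    have hb : ∀ i ∈ Finset.Ioc k n, B i = 66 / 100 * ((i:ℝ) / (n:ℝ)) - 3778 / 10000 := by
      intro i hi
      have hik := (Finset.mem_Ioc.mp hi).1
      have : ¬ (50 * i ≤ 33 * n) := by omega
      simp only [hBdef, if_neg this]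
    have hsid : ∑ i ∈ Finset.Ioc k n, (i:ℝ) = (n:ℝ) * (n + 1) / 2 - (k:ℝ) * (k + 1) / 2 := by
      have := Finset.sum_Ioc_consecutive (fun i => (i:ℝ)) (Nat.zero_le k) hkn
      rw [sumIocId k, sumIocId n] at this
      linarith
    rw [Finset.sum_congr rfl hb, Finset.sum_sub_distrib, Finset.sum_const, Nat.card_Ioc]
    have : ∑ i ∈ Finset.Ioc k n, 66 / 100 * ((i:ℝ) / (n:ℝ))
        = 66 / 100 * ((∑ i ∈ Finset.Ioc k n, (i:ℝ)) / (n:ℝ)) := by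
      rw [Finset.sum_div, Finset.mul_sum]
    rw [this, hsid]
    have hcast : ((n - k : ℕ) : ℝ) = (n:ℝ) - (k:ℝ) := by
      push_cast [hkn]; ring
    simp [hcast, mul_comm]
  -- the key polynomial inequality
  set N : ℝ := (n:ℝ)
  set K : ℝ := (k:ℝ)
  have hP : 0 ≤ 5000 * K * (K + 1) * (2 * K + 1) - 9600 * K * N ^ 2
      + 19800 * N * (N ^ 2 + N - K ^ 2 - K) - 22668 * N ^ 3 + 22668 * N ^ 2 * K := by
    have hr0 : (0:ℝ) ≤ 33 * N - 50 * K := by linarith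
    have hr49 : 33 * N - 50 * K ≤ 49 := by linarith
    have hident : 125000 * (5000 * K * (K + 1) * (2 * K + 1) - 9600 * K * N ^ 2
        + 19800 * N * (N ^ 2 + N - K ^ 2 - K) - 22668 * N ^ 3 + 22668 * N ^ 2 * K)
        = 870000 * N ^ 3 + 1658250000 * N ^ 2 + 412500000 * N
          - 10000 * (33 * N - 50 * K) ^ 3 + 750000 * (33 * N - 50 * K) ^ 2
          - 12500000 * (33 * N - 50 * K) := by ring
    nlinarith [mul_nonneg (mul_nonneg hr0 hr0) (by linarith : (0:ℝ) ≤ 49 - (33 * N - 50 * K)),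
      mul_nonneg hr0 (by linarith : (0:ℝ) ≤ 49 - (33 * N - 50 * K)),
      sq_nonneg (N - 1), mul_nonneg (mul_nonneg (by linarith : (0:ℝ) ≤ N) (by linarith : (0:ℝ) ≤ N)) (by linarith : (0:ℝ) ≤ N - 1),
      mul_nonneg (by linarith : (0:ℝ) ≤ N - 1) (by linarith : (0:ℝ) ≤ N - 1)]
  calc (0:ℝ) ≤ ∑ i ∈ Finset.Icc 1 n, B i := by
        rw [hsplit, hsum1, hsum2]
        have hexp : ((K) * (K + 1) * (2 * K + 1) / 6) / (2 * N ^ 2) - 16 / 100 * K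
            + (66 / 100 * ((N * (N + 1) / 2 - K * (K + 1) / 2) / N)
              - 3778 / 10000 * (N - K))
            = (5000 * K * (K + 1) * (2 * K + 1) - 9600 * K * N ^ 2
              + 19800 * N * (N ^ 2 + N - K ^ 2 - K) - 22668 * N ^ 3 + 22668 * N ^ 2 * K)
              / (60000 * N ^ 2) := by
          field_simp
          ring
        rw [hexp]
        exact div_nonneg hP (by positivity)
    _ ≤ _ := Finset.sum_le_sum hbound
end
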